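/- Let f belong to H^α([−1,1],K) and let r_N = S_N − f be the spline interpolation error. Then r_N satisfies the Hölder condition |r_N(t) − r_N(t′)| ≤ 2^{2−α}·K·|t − t′|^α for all t, t′ ∈ [−1,1]. -/

import Mathlib

/-!
The remainder `r = S - f` vanishes at the nodes. On a single cell `[a, b]` the chord slope gives
`|S x - S y| ≤ K |x - y| ^ α` (since `|x - y| / (b - a) ≤ 1`), so `r` is `2K`-Hölder there.
For `x ≤ y` in different cells, let `a` be the right end of the cell of `x` and `b` the left end
of the cell of `y`; since `r a = r b = 0`, concavity of `s ↦ s ^ α` gives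
`|r x - r y| ≤ 2K ((a - x) ^ α + (y - b) ^ α) ≤ 2K · 2 ^ (1 - α) (y - x) ^ α`.
-/

open Real Set

lemma rpow_add_rpow_le_two_rpow_one_sub_mul {x y α : ℝ} (hx : 0 ≤ x) (hy : 0 ≤ y)
    (hα : 0 ≤ α) (hα1 : α ≤ 1) : x ^ α + y ^ α ≤ 2 ^ (1 - α) * (x + y) ^ α := by
  have hmid := (concaveOn_rpow hα hα1).2 hx hy (by norm_num : (0 : ℝ) ≤ 1 / 2)
    (by norm_num : (0 : ℝ) ≤ 1 / 2) (by norm_num)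
  simp only [smul_eq_mul] at hmid
  have hsplit : (2 : ℝ) ^ (1 - α) * (x + y) ^ α = 2 * ((1 / 2) * x + (1 / 2) * y) ^ α := by
    rw [show (1 / 2) * x + (1 / 2) * y = (x + y) / 2 by ring, div_rpow (by positivity) zero_le_two,
      rpow_sub zero_lt_two, rpow_one]
    ring
  rw [hsplit]
  linarith

lemma exists_mem_Icc_succ_of_mem_Icc {β : Type*} [LinearOrder β] {t : ℕ → β} {N : ℕ}
    (hN : 1 ≤ N) {x : β} (hx : x ∈ Icc (t 0) (t N)) : ∃ k < N, x ∈ Icc (t k) (t (k + 1)) := by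
  induction N, hN using Nat.le_induction with
  | base => exact ⟨0, one_pos, hx⟩
  | succ n _ ih =>
    by_cases hxn : x ≤ t n
    · obtain ⟨k, hk, hxk⟩ := ih ⟨hx.1, hxn⟩
      exact ⟨k, hk.trans n.lt_succ_self, hxk⟩
    · exact ⟨n, n.lt_succ_self, (not_le.1 hxn).le, hx.2⟩

section Cell

variable {a b : ℝ} {f S : ℝ → ℝ} {K α : ℝ}

lemma abs_sub_le_of_linear_interp (hab : a < b) (hα1 : α ≤ 1)
    (hf : ∀ u ∈ Icc a b, ∀ v ∈ Icc a b, |f u - f v| ≤ K * |u - v| ^ α)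
    (hS : ∀ u ∈ Icc a b, S u = ((b - u) * f a + (u - a) * f b) / (b - a))
    {x y : ℝ} (hx : x ∈ Icc a b) (hy : y ∈ Icc a b) : |S x - S y| ≤ K * |x - y| ^ α := by
  have hba : 0 < b - a := sub_pos.2 hab
  set ρ := |x - y| / (b - a) with hρ
  have hρ1 : ρ ≤ 1 := by
    rw [div_le_one hba, abs_sub_le_iff]
    constructor <;> linarith [hx.1, hx.2, hy.1, hy.2]
  have hchord : |S x - S y| = ρ * |f b - f a| := by
    rw [hS x hx, hS y hy, hρ, show ((b - x) * f a + (x - a) * f b) / (b - a)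
        - ((b - y) * f a + (y - a) * f b) / (b - a) = (x - y) / (b - a) * (f b - f a) by
      field_simp; ring, abs_mul, abs_div, abs_of_pos hba]
  have hends : |f b - f a| ≤ K * (b - a) ^ α := by
    simpa [abs_of_pos hba] using hf b (right_mem_Icc.2 hab.le) a (left_mem_Icc.2 hab.le)
  calc |S x - S y| = ρ * |f b - f a| := hchord
    _ ≤ ρ ^ α * (K * (b - a) ^ α) :=
      mul_le_mul (self_le_rpow_of_le_one (by positivity) hρ1 hα1) hends (abs_nonneg _)
        (by positivity)
    _ = K * |x - y| ^ α := by
      rw [hρ, div_rpow (abs_nonneg _) hba.le]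
      field_simp

lemma abs_sub_sub_linear_interp_le (hab : a < b) (hα1 : α ≤ 1)
    (hf : ∀ u ∈ Icc a b, ∀ v ∈ Icc a b, |f u - f v| ≤ K * |u - v| ^ α)
    (hS : ∀ u ∈ Icc a b, S u = ((b - u) * f a + (u - a) * f b) / (b - a))
    {x y : ℝ} (hx : x ∈ Icc a b) (hy : y ∈ Icc a b) :
    |(S x - f x) - (S y - f y)| ≤ 2 * K * |x - y| ^ α :=
  calc |(S x - f x) - (S y - f y)| = |(S x - S y) - (f x - f y)| := by
        rw [sub_sub_sub_comm]
    _ ≤ |S x - S y| + |f x - f y| := abs_sub _ _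
    _ ≤ K * |x - y| ^ α + K * |x - y| ^ α :=
      add_le_add (abs_sub_le_of_linear_interp hab hα1 hf hS hx hy) (hf x hx y hy)
    _ = 2 * K * |x - y| ^ α := by ring

end Cell

theorem abs_sub_le_of_holder_on_cells {N : ℕ} (hN : 1 ≤ N) {t : ℕ → ℝ}
    (hmono : MonotoneOn t (Iic N)) {r : ℝ → ℝ} {C α : ℝ} (hC : 0 ≤ C) (hα : 0 ≤ α)
    (hα1 : α ≤ 1)
    (hcell : ∀ k < N, ∀ x ∈ Icc (t k) (t (k + 1)), ∀ y ∈ Icc (t k) (t (k + 1)),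
      |r x - r y| ≤ C * |x - y| ^ α)
    (hnode : ∀ k < N, r (t k) = 0) {x y : ℝ} (hx : x ∈ Icc (t 0) (t N))
    (hy : y ∈ Icc (t 0) (t N)) : |r x - r y| ≤ 2 ^ (1 - α) * C * |x - y| ^ α := by
  wlog hxy : x ≤ y generalizing x y
  · rw [abs_sub_comm, abs_sub_comm x]
    exact this hy hx (le_of_not_ge hxy)
  obtain ⟨k, hk, hxk⟩ := exists_mem_Icc_succ_of_mem_Icc hN hx
  obtain ⟨j, hj, hyj⟩ := exists_mem_Icc_succ_of_mem_Icc hN hy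
  rcases lt_or_ge k j with hkj | hjk
  · set a := t (k + 1)
    set b := t j
    have hab : a ≤ b := hmono (mem_Iic.2 (by omega)) (mem_Iic.2 hj.le) hkj
    have hxa : |r x - r a| ≤ C * (a - x) ^ α :=
      (hcell k hk x hxk a ⟨hxk.1.trans hxk.2, le_rfl⟩).trans_eq
        (by rw [abs_sub_comm, abs_of_nonneg (sub_nonneg.2 hxk.2)])
    have hyb : |r y - r b| ≤ C * (y - b) ^ α :=
      (hcell j hj y hyj b ⟨le_rfl, hyj.1.trans hyj.2⟩).trans_eq
        (by rw [abs_of_nonneg (sub_nonneg.2 hyj.1)])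
    calc |r x - r y| = |(r x - r a) - (r y - r b)| := by
          rw [hnode (k + 1) (by omega), hnode j hj, sub_zero, sub_zero]
      _ ≤ |r x - r a| + |r y - r b| := abs_sub _ _
      _ ≤ C * ((a - x) ^ α + (y - b) ^ α) := by linarith
      _ ≤ C * (2 ^ (1 - α) * ((a - x) + (y - b)) ^ α) := by
          gcongr
          exact rpow_add_rpow_le_two_rpow_one_sub_mul (by linarith [hxk.2])
            (by linarith [hyj.1]) hα hα1
      _ ≤ C * (2 ^ (1 - α) * (y - x) ^ α) := by
          gcongr
          · linarith [hxk.2, hyj.1]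
          · linarith
      _ = 2 ^ (1 - α) * C * |x - y| ^ α := by
          rw [abs_sub_comm, abs_of_nonneg (sub_nonneg.2 hxy)]
          ring
  · have hyk : y ∈ Icc (t k) (t (k + 1)) :=
      ⟨hxk.1.trans hxy, hyj.2.trans (hmono (mem_Iic.2 hj) (mem_Iic.2 hk) (by omega))⟩
    calc |r x - r y| ≤ C * |x - y| ^ α := hcell k hk x hxk y hyk
      _ ≤ 2 ^ (1 - α) * C * |x - y| ^ α := by
          rw [mul_assoc]
          exact le_mul_of_one_le_left (by positivity) (one_le_rpow one_le_two (by linarith))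

theorem spline_remainder_holder_Halpha
    (N : ℕ) (hN : 1 ≤ N)
    (t : ℕ → ℝ) (ht0 : t 0 = -1) (htN : t N = 1)
    (hmono : ∀ k, k < N → t k < t (k + 1))
    (f S : ℝ → ℝ) (K α : ℝ) (hα : 0 < α) (hα1 : α ≤ 1) (hK : 0 < K)
    (hf : ∀ u ∈ Set.Icc (-1 : ℝ) 1, ∀ v ∈ Set.Icc (-1 : ℝ) 1,
      |f u - f v| ≤ K * |u - v| ^ α)
    (hS : ∀ k, k < N → ∀ u ∈ Set.Icc (t k) (t (k + 1)),
      S u = ((t (k + 1) - u) * f (t k) + (u - t k) * f (t (k + 1))) / (t (k + 1) - t k))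
    (u : ℝ) (hu : u ∈ Set.Icc (-1 : ℝ) 1) (v : ℝ) (hv : v ∈ Set.Icc (-1 : ℝ) 1) :
    |(S u - f u) - (S v - f v)| ≤ 2 ^ (2 - α) * K * |u - v| ^ α := by
  have hgrid : MonotoneOn t (Iic N) := (strictMonoOn_Iic_of_lt_succ hmono).monotoneOn
  have hcell_sub : ∀ k < N, Icc (t k) (t (k + 1)) ⊆ Icc (-1) 1 := fun k hk =>
    ht0 ▸ htN ▸ Icc_subset_Icc (hgrid (mem_Iic.2 (Nat.zero_le N)) (mem_Iic.2 hk.le) k.zero_le)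
      (hgrid (mem_Iic.2 hk) (mem_Iic.2 le_rfl) hk)
  have hcell : ∀ k < N, ∀ x ∈ Icc (t k) (t (k + 1)), ∀ y ∈ Icc (t k) (t (k + 1)),
      |(S x - f x) - (S y - f y)| ≤ 2 * K * |x - y| ^ α := fun k hk _ hx _ hy =>
    abs_sub_sub_linear_interp_le (hmono k hk) hα1
      (fun u hu v hv => hf u (hcell_sub k hk hu) v (hcell_sub k hk hv)) (hS k hk) hx hy
  have hnode : ∀ k < N, S (t k) - f (t k) = 0 := fun k hk => by
    rw [hS k hk _ (left_mem_Icc.2 (hmono k hk).le), sub_self, zero_mul, add_zero,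
      mul_div_cancel_left₀ _ (sub_pos.2 (hmono k hk)).ne', sub_self]
  have hglue := abs_sub_le_of_holder_on_cells hN hgrid (by positivity) hα.le hα1 hcell hnode
    (x := u) (y := v) (by rwa [ht0, htN]) (by rwa [ht0, htN])
  rwa [show (2 : ℝ) ^ (2 - α) * K = 2 ^ (1 - α) * (2 * K) by
    rw [show (2 : ℝ) - α = (1 - α) + 1 by ring, rpow_add_one two_ne_zero]; ring]
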